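/- Fix b ≥ 1 and let f(a0, a1) = |a0| + |a1| mod 2 be the parity of the 2b bits a0 a1 (|a| denoting Hamming weight). For every two-outcome POVM (E0, E1) on ℂ^{2^{b+1}} and every ε ≥ 0: if ⟨Ψ_{a0 a1}, E_{f(a0,a1)} Ψ_{a0 a1}⟩ ≥ 1/2 + ε holds for all a0, a1 ∈ {0,1}^b, then ε ≤ 1/2^{b+1}. Hence no measurement of one copy of Ψ_{a0 a1} computes the parity of a0 a1 with success probability exceeding 1/2 + 1/2^{b+1} on all inputs. -/

import Mathlib

/-!
Put `D = E₀ - E₁`, so that `-1 ≤ D ≤ 1`. The hypothesis says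
`(-1)^{|a0|+|a1|} ⟨Ψ_{a0a1}, D Ψ_{a0a1}⟩ ≥ 2ε` for each of the `4^b` inputs. Summing with these
signs, the diagonal terms `|c,a⟩⟨c,a|` of `|Ψ⟩⟨Ψ|` cancel because `∑ₐ (-1)^{|a|} = 0`, and what
remains is `(|x⟩⟨x| - |y⟩⟨y|)/4` with `x, y = (|0⟩ ± |1⟩) ⊗ χ`, `χ = ∑ₐ (-1)^{|a|} |a⟩`.
Since `‖x‖² = ‖y‖² = 2^{b+1}`, the signed sum is at most `2^b`, so `4^b · 2ε ≤ 2^b`.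
-/

open ComplexOrder Matrix

/-- The state `Ψ_{a0 a1} = (1/√2)(|0⟩⊗|a0⟩ + |1⟩⊗|a1⟩)` in `ℂ² ⊗ ℂ^{2^b}`,
written as a vector indexed by the standard basis `Bool × (Fin b → Bool)`. -/
noncomputable def Psi (b : ℕ) (a0 a1 : Fin b → Bool) : Bool × (Fin b → Bool) → ℂ :=
  fun p =>
    ((if p = (false, a0) then 1 else 0) + (if p = (true, a1) then 1 else 0)) /
      (Real.sqrt 2 : ℂ)

/-- Hamming weight of a bit string. -/
def wt {b : ℕ} (a : Fin b → Bool) : ℕ := (Finset.univ.filter fun k => a k = true).card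

section POVM

variable {ι : Type*} [Fintype ι] [DecidableEq ι] {E₀ E₁ : Matrix ι ι ℂ}

lemma re_dotProduct_mulVec_add_eq (hsum : E₀ + E₁ = 1) (w : ι → ℂ) :
    (star w ⬝ᵥ (E₀ *ᵥ w)).re + (star w ⬝ᵥ (E₁ *ᵥ w)).re = (star w ⬝ᵥ w).re := by
  rw [← Complex.add_re, ← dotProduct_add, ← add_mulVec, hsum, one_mulVec]

lemma abs_re_dotProduct_mulVec_sub_le (h₀ : E₀.PosSemidef) (h₁ : E₁.PosSemidef)
    (hsum : E₀ + E₁ = 1) (w : ι → ℂ) :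
    |(star w ⬝ᵥ ((E₀ - E₁) *ᵥ w)).re| ≤ (star w ⬝ᵥ w).re := by
  have q₀ := (Complex.nonneg_iff.mp (h₀.dotProduct_mulVec_nonneg w)).1
  have q₁ := (Complex.nonneg_iff.mp (h₁.dotProduct_mulVec_nonneg w)).1
  rw [sub_mulVec, dotProduct_sub, Complex.sub_re, ← re_dotProduct_mulVec_add_eq hsum w, abs_le]
  constructor <;> linarith

end POVM

lemma two_mul_le_neg_one_pow_mul_sub {ε : ℝ} {n : ℕ} {P : Bool → ℝ}
    (hP : P false + P true = 1) (h : 1 / 2 + ε ≤ P (decide (n % 2 = 1))) :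
    2 * ε ≤ (-1) ^ n * (P false - P true) := by
  rcases Nat.even_or_odd n with hn | hn
  · simp [Nat.even_iff.mp hn, hn.neg_one_pow] at h ⊢; linarith
  · simp [Nat.odd_iff.mp hn, hn.neg_one_pow] at h ⊢; linarith

lemma star_dotProduct_self_eq_card {ι : Type*} [Fintype ι] {w : ι → ℂ}
    (hw : ∀ p, ‖w p‖ = 1) : star w ⬝ᵥ w = Fintype.card ι := by
  simp [dotProduct, Complex.conj_mul', hw]

section Parity

variable {b : ℕ}

lemma neg_one_pow_wt_eq_prod {R : Type*} [CommRing R] (a : Fin b → Bool) :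
    (-1 : R) ^ wt a = ∏ k, if a k then -1 else 1 := by
  rw [wt, Finset.prod_ite, Finset.prod_const, Finset.prod_const_one, mul_one]

lemma sum_neg_one_pow_wt {R : Type*} [CommRing R] (hb : 0 < b) :
    ∑ a : Fin b → Bool, (-1 : R) ^ wt a = 0 := by
  simp_rw [neg_one_pow_wt_eq_prod]
  rw [← Fintype.prod_sum fun _ c => if c = true then (-1 : R) else 1]
  simp [zero_pow hb.ne']

lemma Psi_eq_smul (a0 a1 : Fin b → Bool) :
    Psi b a0 a1 = (Real.sqrt 2 : ℂ)⁻¹ • (Pi.single (false, a0) 1 + Pi.single (true, a1) 1) := by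
  funext p
  simp [Psi, Pi.single_apply, div_eq_inv_mul]

lemma dotProduct_mulVec_Psi (M : Matrix (Bool × (Fin b → Bool)) (Bool × (Fin b → Bool)) ℂ)
    (a0 a1 : Fin b → Bool) :
    star (Psi b a0 a1) ⬝ᵥ (M *ᵥ Psi b a0 a1) =
      (M (false, a0) (false, a0) + M (false, a0) (true, a1) +
        M (true, a1) (false, a0) + M (true, a1) (true, a1)) / 2 := by
  have hs : ((Real.sqrt 2 : ℂ))⁻¹ ^ 2 = 1 / 2 := by
    rw [inv_pow, ← Complex.ofReal_pow, Real.sq_sqrt zero_le_two]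
    norm_num
  simp only [Psi_eq_smul, star_smul, mulVec_smul, smul_dotProduct, dotProduct_smul, smul_eq_mul,
    star_add, mulVec_add, add_dotProduct, dotProduct_add]
  simp [mulVec_single, dotProduct, Pi.single_apply]
  linear_combination (M (false, a0) (false, a0) + M (false, a0) (true, a1) +
    M (true, a1) (false, a0) + M (true, a1) (true, a1)) * hs

lemma star_dotProduct_self_Psi (a0 a1 : Fin b → Bool) :
    star (Psi b a0 a1) ⬝ᵥ Psi b a0 a1 = 1 := by
  simpa [one_apply] using dotProduct_mulVec_Psi 1 a0 a1

/-- `chiVec b c = |c⟩ ⊗ χ` with `χ = ∑ₐ (-1)^{|a|} |a⟩`. -/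
noncomputable def chiVec (b : ℕ) (c : Bool) : Bool × (Fin b → Bool) → ℂ :=
  fun p => if p.1 = c then (-1) ^ wt p.2 else 0

lemma dotProduct_mulVec_chiVec
    (M : Matrix (Bool × (Fin b → Bool)) (Bool × (Fin b → Bool)) ℂ) (c d : Bool) :
    star (chiVec b c) ⬝ᵥ (M *ᵥ chiVec b d) =
      ∑ α, ∑ β, (-1 : ℂ) ^ (wt α + wt β) * M (c, α) (d, β) := by
  cases c <;> simp [chiVec, dotProduct, mulVec, Fintype.sum_prod_type, Finset.mul_sum, pow_add,
    mul_assoc, mul_comm (M _ _)]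

lemma star_dotProduct_self_chiVec_add_smul {σ : ℂ} (hσ : ‖σ‖ = 1) :
    star (chiVec b false + σ • chiVec b true) ⬝ᵥ (chiVec b false + σ • chiVec b true) =
      2 ^ (b + 1) := by
  rw [star_dotProduct_self_eq_card]
  · simp [pow_succ, mul_comm]
  · rintro ⟨_ | _, a⟩ <;> simp [chiVec, hσ]

lemma sum_neg_one_pow_mul_dotProduct_mulVec_Psi (hb : 0 < b)
    (M : Matrix (Bool × (Fin b → Bool)) (Bool × (Fin b → Bool)) ℂ) :
    ∑ a0, ∑ a1, (-1 : ℂ) ^ (wt a0 + wt a1) * (star (Psi b a0 a1) ⬝ᵥ (M *ᵥ Psi b a0 a1)) =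
      (star (chiVec b false) ⬝ᵥ (M *ᵥ chiVec b true) +
        star (chiVec b true) ⬝ᵥ (M *ᵥ chiVec b false)) / 2 := by
  have diag_left (f : (Fin b → Bool) → ℂ) :
      ∑ a0 : Fin b → Bool, ∑ a1 : Fin b → Bool, (-1 : ℂ) ^ (wt a0 + wt a1) * f a0 = 0 := by
    simp [pow_add, mul_right_comm _ _ (f _), ← Finset.mul_sum, sum_neg_one_pow_wt hb]
  have diag_right (f : (Fin b → Bool) → ℂ) :
      ∑ a0 : Fin b → Bool, ∑ a1 : Fin b → Bool, (-1 : ℂ) ^ (wt a0 + wt a1) * f a1 = 0 := by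
    rw [Finset.sum_comm]
    simp [pow_add, mul_comm, ← Finset.mul_sum, sum_neg_one_pow_wt hb]
  have cross : star (chiVec b true) ⬝ᵥ (M *ᵥ chiVec b false) =
      ∑ a0, ∑ a1, (-1 : ℂ) ^ (wt a0 + wt a1) * M (true, a1) (false, a0) := by
    rw [dotProduct_mulVec_chiVec, Finset.sum_comm]
    exact Finset.sum_congr rfl fun _ _ => Finset.sum_congr rfl fun _ _ => by rw [add_comm]
  rw [cross, dotProduct_mulVec_chiVec]
  simp only [dotProduct_mulVec_Psi, mul_div, mul_add, Finset.sum_add_distrib, diag_left,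
    diag_right, ← Finset.sum_div]
  ring

lemma sum_neg_one_pow_mul_re_dotProduct_mulVec_Psi_le (hb : 0 < b)
    {E₀ E₁ : Matrix (Bool × (Fin b → Bool)) (Bool × (Fin b → Bool)) ℂ}
    (h₀ : E₀.PosSemidef) (h₁ : E₁.PosSemidef) (hsum : E₀ + E₁ = 1) :
    ∑ a0, ∑ a1, (-1 : ℝ) ^ (wt a0 + wt a1) *
      (star (Psi b a0 a1) ⬝ᵥ ((E₀ - E₁) *ᵥ Psi b a0 a1)).re ≤ 2 ^ b := by
  set u := chiVec b false
  set v := chiVec b true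
  set D := E₀ - E₁
  have polarization : ∑ a0, ∑ a1, (-1 : ℂ) ^ (wt a0 + wt a1) *
      (star (Psi b a0 a1) ⬝ᵥ (D *ᵥ Psi b a0 a1)) =
      (star (u + (1 : ℂ) • v) ⬝ᵥ (D *ᵥ (u + (1 : ℂ) • v)) -
        star (u + (-1 : ℂ) • v) ⬝ᵥ (D *ᵥ (u + (-1 : ℂ) • v))) / 4 := by
    rw [sum_neg_one_pow_mul_dotProduct_mulVec_Psi hb]
    simp only [one_smul, neg_one_smul, star_add, star_neg, mulVec_add, mulVec_neg, add_dotProduct,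
      dotProduct_add, neg_dotProduct, dotProduct_neg]
    ring
  have bound (σ : ℂ) (hσ : ‖σ‖ = 1) :
      |(star (u + σ • v) ⬝ᵥ (D *ᵥ (u + σ • v))).re| ≤ 2 ^ (b + 1) := by
    have := abs_re_dotProduct_mulVec_sub_le h₀ h₁ hsum (u + σ • v)
    rwa [star_dotProduct_self_chiVec_add_smul hσ, ← Complex.ofReal_ofNat, ← Complex.ofReal_pow,
      Complex.ofReal_re] at this
  have re_sign (n : ℕ) (z : ℂ) : ((-1 : ℂ) ^ n * z).re = (-1) ^ n * z.re := by
    exact_mod_cast Complex.re_ofReal_mul ((-1) ^ n) z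
  have hre := congrArg Complex.re polarization
  simp only [Complex.re_sum, re_sign, Complex.div_ofNat_re, Complex.sub_re] at hre
  rw [hre]
  have h_plus := (abs_le.mp (bound 1 norm_one)).2
  have h_minus := (abs_le.mp (bound (-1) (by simp))).1
  rw [pow_succ] at h_plus h_minus
  linarith

end Parity

theorem stmt5_general (b : ℕ) (hb : 1 ≤ b) (ε : ℝ)
    (E : Bool → Matrix (Bool × (Fin b → Bool)) (Bool × (Fin b → Bool)) ℂ)
    (hE0 : (E false).PosSemidef) (hE1 : (E true).PosSemidef)
    (hsum : E false + E true = 1)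
    (h : ∀ a0 a1 : Fin b → Bool,
      1 / 2 + ε ≤
        (star (Psi b a0 a1) ⬝ᵥ
          (E (decide ((wt a0 + wt a1) % 2 = 1)) *ᵥ Psi b a0 a1)).re) :
    ε ≤ 1 / 2 ^ (b + 1) := by
  have pointwise (a0 a1 : Fin b → Bool) : 2 * ε ≤ (-1) ^ (wt a0 + wt a1) *
      (star (Psi b a0 a1) ⬝ᵥ ((E false - E true) *ᵥ Psi b a0 a1)).re := by
    rw [sub_mulVec, dotProduct_sub, Complex.sub_re]
    refine two_mul_le_neg_one_pow_mul_sub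
      (P := fun k => (star (Psi b a0 a1) ⬝ᵥ (E k *ᵥ Psi b a0 a1)).re) ?_ (h a0 a1)
    simpa [star_dotProduct_self_Psi] using re_dotProduct_mulVec_add_eq hsum (Psi b a0 a1)
  have total : (2 ^ b * 2 ^ b : ℝ) * (2 * ε) ≤ 2 ^ b := by
    refine le_trans ?_ (sum_neg_one_pow_mul_re_dotProduct_mulVec_Psi_le hb hE0 hE1 hsum)
    simpa [Fintype.card_fun, mul_assoc] using
      Finset.sum_le_sum fun a0 (_ : a0 ∈ Finset.univ) =>
        Finset.sum_le_sum fun a1 (_ : a1 ∈ Finset.univ) => pointwise a0 a1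
  rw [le_div_iff₀ (by positivity), pow_succ]
  nlinarith [pow_pos (two_pos (α := ℝ)) b]

/-- if a two-outcome POVM `(E0, E1)` on `ℂ^{2^{b+1}}` computes the parity
`f(a0,a1) = |a0| + |a1| mod 2` from one copy of `Ψ_{a0 a1}` with success probability at
least `1/2 + ε` on all inputs, then `ε ≤ 1/2^{b+1}`. -/
theorem stmt5 (b : ℕ) (hb : 1 ≤ b) (ε : ℝ) (hε : 0 ≤ ε)
    (E : Bool → Matrix (Bool × (Fin b → Bool)) (Bool × (Fin b → Bool)) ℂ)
    (hE0 : (E false).PosSemidef) (hE1 : (E true).PosSemidef)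
    (hsum : E false + E true = 1)
    (h : ∀ a0 a1 : Fin b → Bool,
      1 / 2 + ε ≤
        (star (Psi b a0 a1) ⬝ᵥ
          (E (decide ((wt a0 + wt a1) % 2 = 1)) *ᵥ Psi b a0 a1)).re) :
    ε ≤ 1 / 2 ^ (b + 1) :=
  stmt5_general b hb ε E hE0 hE1 hsum h
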